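/- For γ1 ∈ (0, π/4], set x3^(3) = −tan²γ1 and define g(x3) = (1 − x3) cos²γ1 / 2 for −1 ≤ x3 ≤ x3^(3); g(x3) = −(1 − x3)²(1 + x3) sin²(2γ1) / (−1 + x3(2 + 7x3) + (1 − x3)² cos(4γ1)) for x3^(3) < x3 < 0; and g(x3) = (1 + x3)/2 for 0 ≤ x3 ≤ 1. Then for each fixed x3 ∈ (−1, 0), g(x3) is monotonically decreasing as a function of γ1 on (0, π/4], and for x3 ∈ [0,1], g(x3) is independent of γ1. -/

import Mathlib

/-!
Put `v = cos² γ1`, which decreases strictly from `1` to `1/2` on `(0, π/4]`. Since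
`tan² γ1 = (1 - v) / v`, the threshold `x ≤ -tan² γ1` reads `1 ≤ (1 - x) v`, and the middle
formula equals `(1 + x)/2 · w / (w - x²)` with `w = (1 - x)² v (1 - v)`. So `g` is a function of
`v` alone, and for `x ∈ (-1, 0)` it is strictly increasing in `v ≥ 1/2`: the first branch is
linear in `v` and at least `1/2`, while on the middle range `w > -x > x²` (as
`w + x = (1 - (1 - x) v)((1 - x) v + x)`), which makes the middle branch smaller than `1/2`
and increasing, because `w` decreases in `v`. For `x ≥ 0` the threshold is never met, and
`g = (1 + x)/2`.
-/

open Real Set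

noncomputable def middleBranch (x v : ℝ) : ℝ :=
  (1 - x) ^ 2 * (1 + x) * (v * (1 - v)) / (2 * ((1 - x) ^ 2 * (v * (1 - v)) - x ^ 2))

noncomputable def geomMeasureOfCosSq (x v : ℝ) : ℝ :=
  if 1 ≤ (1 - x) * v then (1 - x) * v / 2 else middleBranch x v

section MiddleBranch

variable {x v : ℝ}

lemma neg_lt_one_sub_sq_mul_mul_one_sub (hx1 : -1 < x) (hx0 : x < 0) (hv : 1 / 2 ≤ v)
    (hb : (1 - x) * v < 1) : -x < (1 - x) ^ 2 * (v * (1 - v)) := by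
  have hpos : 0 < (1 - x) * v + x := by
    nlinarith [mul_nonneg (by linarith : (0 : ℝ) ≤ 1 - x) (by linarith : 0 ≤ v - 1 / 2)]
  have factor : (1 - x) ^ 2 * (v * (1 - v)) + x = (1 - (1 - x) * v) * ((1 - x) * v + x) := by
    ring
  linarith [mul_pos (sub_pos.mpr hb) hpos]

lemma sq_lt_one_sub_sq_mul_mul_one_sub (hx1 : -1 < x) (hx0 : x < 0) (hv : 1 / 2 ≤ v)
    (hb : (1 - x) * v < 1) : x ^ 2 < (1 - x) ^ 2 * (v * (1 - v)) := by
  nlinarith [neg_lt_one_sub_sq_mul_mul_one_sub hx1 hx0 hv hb]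

lemma middleBranch_lt_half (hx1 : -1 < x) (hx0 : x < 0) (hv : 1 / 2 ≤ v)
    (hb : (1 - x) * v < 1) : middleBranch x v < 1 / 2 := by
  have hw := neg_lt_one_sub_sq_mul_mul_one_sub hx1 hx0 hv hb
  have hD := sq_lt_one_sub_sq_mul_mul_one_sub hx1 hx0 hv hb
  rw [middleBranch, div_lt_iff₀ (by linarith)]
  nlinarith [mul_pos (neg_pos.mpr hx0) (by linarith : 0 < (1 - x) ^ 2 * (v * (1 - v)) + x)]

lemma middleBranch_strictMonoOn (hx1 : -1 < x) (hx0 : x < 0) :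
    StrictMonoOn (middleBranch x) {v | 1 / 2 ≤ v ∧ (1 - x) * v < 1} := by
  rintro v₁ ⟨hv₁, hb₁⟩ v₂ ⟨hv₂, hb₂⟩ hlt
  have hD₁ := sq_lt_one_sub_sq_mul_mul_one_sub hx1 hx0 hv₁ hb₁
  have hD₂ := sq_lt_one_sub_sq_mul_mul_one_sub hx1 hx0 hv₂ hb₂
  rw [middleBranch, middleBranch, div_lt_div_iff₀ (by linarith) (by linarith)]
  have hw : 0 < v₁ * (1 - v₁) - v₂ * (1 - v₂) := by nlinarith
  have hx2 : 0 < x ^ 2 := by nlinarith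
  nlinarith [mul_pos (mul_pos (mul_pos hx2 (pow_pos (by linarith : (0 : ℝ) < 1 - x) 2))
    (by linarith : (0 : ℝ) < 1 + x)) hw]

lemma geomMeasureOfCosSq_strictMonoOn (hx1 : -1 < x) (hx0 : x < 0) :
    StrictMonoOn (geomMeasureOfCosSq x) (Ici (1 / 2)) := by
  intro v₁ (hv₁ : 1 / 2 ≤ v₁) v₂ (hv₂ : 1 / 2 ≤ v₂) hlt
  have hmul : (1 - x) * v₁ < (1 - x) * v₂ := by nlinarith
  unfold geomMeasureOfCosSq
  by_cases h₁ : 1 ≤ (1 - x) * v₁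
  · rw [if_pos h₁, if_pos (h₁.trans hmul.le)]
    linarith
  rw [if_neg h₁]
  by_cases h₂ : 1 ≤ (1 - x) * v₂
  · rw [if_pos h₂]
    linarith [middleBranch_lt_half hx1 hx0 hv₁ (not_le.mp h₁)]
  · rw [if_neg h₂]
    exact middleBranch_strictMonoOn hx1 hx0 ⟨hv₁, not_le.mp h₁⟩ ⟨hv₂, not_le.mp h₂⟩ hlt

end MiddleBranch

lemma cos_sq_strictAntiOn : StrictAntiOn (fun γ => cos γ ^ 2) (Ioc 0 (π / 4)) := by
  rintro a ⟨ha0, ha⟩ b ⟨hb0, hb⟩ hab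
  have hcos : cos b < cos a := cos_lt_cos_of_nonneg_of_le_pi ha0.le (by linarith [pi_pos]) hab
  have hcb : 0 ≤ cos b := cos_nonneg_of_mem_Icc ⟨by linarith [pi_pos], by linarith⟩
  exact pow_lt_pow_left₀ hcos hcb two_ne_zero

lemma half_le_cos_sq {γ : ℝ} (h0 : 0 ≤ γ) (h : γ ≤ π / 4) : 1 / 2 ≤ cos γ ^ 2 := by
  have : 0 ≤ cos (2 * γ) := cos_nonneg_of_mem_Icc ⟨by linarith [pi_pos], by linarith⟩
  rw [cos_sq]
  linarith

lemma le_neg_tan_sq_iff {x γ : ℝ} (hc : 0 < cos γ) :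
    x ≤ -tan γ ^ 2 ↔ 1 ≤ (1 - x) * cos γ ^ 2 := by
  rw [tan_eq_sin_div_cos, div_pow, ← neg_div, le_div_iff₀ (pow_pos hc 2)]
  have := sin_sq_add_cos_sq γ
  constructor <;> intro <;> nlinarith

lemma neg_div_eq_middleBranch (x γ : ℝ) :
    -((1 - x) ^ 2 * (1 + x) * sin (2 * γ) ^ 2) /
      (-1 + x * (2 + 7 * x) + (1 - x) ^ 2 * cos (4 * γ)) = middleBranch x (cos γ ^ 2) := by
  have hs : sin γ ^ 2 = 1 - cos γ ^ 2 := sin_sq γ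
  have h4 : cos (4 * γ) = 2 * cos (2 * γ) ^ 2 - 1 := by
    rw [show (4 : ℝ) * γ = 2 * (2 * γ) by ring, cos_two_mul]
  have hnum : -((1 - x) ^ 2 * (1 + x) * sin (2 * γ) ^ 2)
      = -4 * ((1 - x) ^ 2 * (1 + x) * (cos γ ^ 2 * (1 - cos γ ^ 2))) := by
    rw [sin_two_mul]
    linear_combination (-4 * (1 - x) ^ 2 * (1 + x) * cos γ ^ 2) * hs
  have hden : -1 + x * (2 + 7 * x) + (1 - x) ^ 2 * cos (4 * γ)
      = -4 * (2 * ((1 - x) ^ 2 * (cos γ ^ 2 * (1 - cos γ ^ 2)) - x ^ 2)) := by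
    rw [h4, cos_two_mul]
    ring
  rw [hnum, hden, middleBranch, mul_div_mul_left _ _ (by norm_num : (-4 : ℝ) ≠ 0)]

theorem stmt10 :
    let g : ℝ → ℝ → ℝ := fun γ1 x =>
      if x ≤ -(Real.tan γ1)^2 then (1 - x) * (Real.cos γ1)^2 / 2
      else if x < 0 then
        -((1 - x)^2 * (1 + x) * (Real.sin (2*γ1))^2) /
          (-1 + x * (2 + 7*x) + (1 - x)^2 * Real.cos (4*γ1))
      else (1 + x) / 2
    (∀ x ∈ Set.Ioo (-1:ℝ) 0, StrictAntiOn (fun γ1 => g γ1 x) (Set.Ioc 0 (π/4))) ∧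
      (∀ x ∈ Set.Icc (0:ℝ) 1, ∀ γ1 ∈ Set.Ioc (0:ℝ) (π/4), ∀ γ1' ∈ Set.Ioc (0:ℝ) (π/4),
        g γ1 x = g γ1' x) := by
  intro g
  refine ⟨fun x ⟨hx1, hx0⟩ => ?_, fun x ⟨hx0, _⟩ γ hγ γ' hγ' => ?_⟩
  · have hg : EqOn (geomMeasureOfCosSq x ∘ fun γ => cos γ ^ 2) (fun γ => g γ x)
        (Ioc 0 (π / 4)) := by
      rintro γ ⟨h0, h4⟩
      have hc : 0 < cos γ := cos_pos_of_mem_Ioo ⟨by linarith, by linarith [pi_pos]⟩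
      simp only [g, Function.comp_apply, geomMeasureOfCosSq, le_neg_tan_sq_iff hc, if_pos hx0,
        neg_div_eq_middleBranch]
    exact ((geomMeasureOfCosSq_strictMonoOn hx1 hx0).comp_strictAntiOn cos_sq_strictAntiOn
      fun γ hγ => half_le_cos_sq hγ.1.le hγ.2).congr hg
  · have hconst : ∀ γ ∈ Ioc 0 (π / 4), g γ x = (1 + x) / 2 := by
      rintro γ ⟨h0, h4⟩
      have ht : 0 < tan γ := tan_pos_of_pos_of_lt_pi_div_two h0 (by linarith [pi_pos])
      have hlt : -tan γ ^ 2 < x := by nlinarith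
      simp only [g, if_neg hlt.not_ge, if_neg hx0.not_gt]
    rw [hconst γ hγ, hconst γ' hγ']
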